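/- arXiv:1706.08651 — 4 statements merged into one kernel-verified Lean document; each statement's English description precedes it below -/
import Mathlib

section
/- Let $X$ be a separable topological algebra over $\mathbb{K}$ that is a Baire space and has a countable base of open sets. Then the set of sequences $f = (f_n)_{n\in\mathbb{N}} \in X^{\mathbb{N}}$ (with the product topology) such that the subalgebra generated by $\{f_n : n \in \mathbb{N}\}$ is dense in $X$ is a dense $G_\delta$ (hence residual) subset of $X^{\mathbb{N}}$. -/
/-!
Every element of the algebra generated by a sequence `f` is a continuous expression in `f`
that stays in the algebra generated by `g` when `g` is put in place of `f`. Hence meeting a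
given open set is an open condition on `f`, and by second countability density of the
generated algebra is a countable intersection of such conditions. For density, any `f` is a
coordinatewise limit of sequences that eventually run through a fixed dense sequence.
-/

open Set Filter Topology TopologicalSpace

section AdjoinRange

variable {ι R A : Type*} [CommSemiring R] [NonUnitalNonAssocSemiring A] [Module R A]
  [IsScalarTower R A A] [SMulCommClass R A A] [TopologicalSpace A]
  [ContinuousAdd A] [ContinuousMul A] [ContinuousConstSMul R A]

theorem NonUnitalAlgebra.exists_continuous_of_mem_adjoin_range {f : ι → A} {x : A}
    (hx : x ∈ NonUnitalAlgebra.adjoin R (range f)) :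
    ∃ Φ : (ι → A) → A, Continuous Φ ∧ Φ f = x ∧
      ∀ g, Φ g ∈ NonUnitalAlgebra.adjoin R (range g) := by
  induction hx using NonUnitalAlgebra.adjoin_induction with
  | mem x hx =>
    obtain ⟨i, rfl⟩ := hx
    exact ⟨fun g => g i, continuous_apply i, rfl,
      fun g => NonUnitalAlgebra.subset_adjoin R (mem_range_self i)⟩
  | zero => exact ⟨fun _ => 0, continuous_const, rfl, fun _ => zero_mem _⟩
  | add x y _ _ hx hy =>
    obtain ⟨Φ, hΦ, rfl, hΦg⟩ := hx
    obtain ⟨Ψ, hΨ, rfl, hΨg⟩ := hy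
    exact ⟨Φ + Ψ, hΦ.add hΨ, rfl, fun g => add_mem (hΦg g) (hΨg g)⟩
  | mul x y _ _ hx hy =>
    obtain ⟨Φ, hΦ, rfl, hΦg⟩ := hx
    obtain ⟨Ψ, hΨ, rfl, hΨg⟩ := hy
    exact ⟨Φ * Ψ, hΦ.mul hΨ, rfl, fun g => mul_mem (hΦg g) (hΨg g)⟩
  | smul r x _ hx =>
    obtain ⟨Φ, hΦ, rfl, hΦg⟩ := hx
    exact ⟨r • Φ, hΦ.const_smul r, rfl, fun g => SMulMemClass.smul_mem r (hΦg g)⟩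

theorem NonUnitalAlgebra.isOpen_setOf_inter_adjoin_range_nonempty {U : Set A} (hU : IsOpen U) :
    IsOpen {f : ι → A | (U ∩ NonUnitalAlgebra.adjoin R (range f)).Nonempty} := by
  refine isOpen_iff_forall_mem_open.2 fun f ⟨x, hxU, hx⟩ => ?_
  obtain ⟨Φ, hΦ, rfl, hΦg⟩ := exists_continuous_of_mem_adjoin_range hx
  exact ⟨Φ ⁻¹' U, fun g hg => ⟨Φ g, hg, hΦg g⟩, hU.preimage hΦ, hxU⟩

end AdjoinRange

theorem isGδ_setOf_dense {Y X : Type*} [TopologicalSpace Y] [TopologicalSpace X]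
    [SecondCountableTopology X] {S : Y → Set X}
    (hS : ∀ U, IsOpen U → IsOpen {y | (U ∩ S y).Nonempty}) :
    IsGδ {y | Dense (S y)} := by
  obtain ⟨B, hBc, -, hB⟩ := exists_countable_basis X
  have : {y | Dense (S y)} = ⋂ U ∈ B, {y | U.Nonempty → (U ∩ S y).Nonempty} := by
    ext y
    simp only [mem_ofPred_eq, mem_iInter, hB.dense_iff]
  rw [this]
  refine .biInter hBc fun U hU => ?_
  rcases U.eq_empty_or_nonempty with rfl | hne
  · simp
  · simpa [hne] using (hS U (hB.isOpen hU)).isGδ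

theorem dense_setOf_range_subset_range {X : Type*} [TopologicalSpace X] (d : ℕ → X) :
    Dense {f : ℕ → X | range d ⊆ range f} := by
  intro f
  -- overwrite all coordinates from `N` on by `d`; as `N → ∞` this converges to `f` coordinatewise
  let g : ℕ → ℕ → X := fun N n => if n < N then f n else d (n - N)
  have hg : Tendsto g atTop (𝓝 f) := tendsto_pi_nhds.2 fun n =>
    tendsto_atTop_of_eventually_const (i₀ := n + 1) fun N hN => if_pos (by omega)
  refine mem_closure_of_tendsto hg (.of_forall fun N => ?_)
  rintro _ ⟨k, rfl⟩
  exact ⟨k + N, by simp [g]⟩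

theorem stmt_5_general (𝕂 X : Type*) [RCLike 𝕂] [CommRing X] [Algebra 𝕂 X]
    [TopologicalSpace X] [IsTopologicalRing X] [ContinuousSMul 𝕂 X]
    [SecondCountableTopology X] :
    IsGδ {f : ℕ → X |
        Dense ((NonUnitalAlgebra.adjoin 𝕂 (Set.range f) : NonUnitalSubalgebra 𝕂 X) : Set X)} ∧
    Dense {f : ℕ → X |
        Dense ((NonUnitalAlgebra.adjoin 𝕂 (Set.range f) : NonUnitalSubalgebra 𝕂 X) : Set X)} := by
  refine ⟨isGδ_setOf_dense fun U hU =>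
    NonUnitalAlgebra.isOpen_setOf_inter_adjoin_range_nonempty hU, ?_⟩
  obtain ⟨d, hd⟩ := exists_dense_seq X
  refine (dense_setOf_range_subset_range d).mono fun f hf => ?_
  exact (hd.mono hf).mono (NonUnitalAlgebra.subset_adjoin 𝕂)

/-- The subalgebra (without unit) generated by a sequence, in a separable topological
algebra that is a Baire space with countable base: the set of sequences generating a
dense subalgebra is a dense `Gδ` subset of `X^ℕ`. -/
theorem stmt_5 (𝕂 X : Type*) [RCLike 𝕂] [CommRing X] [Algebra 𝕂 X]
    [TopologicalSpace X] [IsTopologicalRing X] [ContinuousSMul 𝕂 X]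
    [BaireSpace X] [SecondCountableTopology X] :
    IsGδ {f : ℕ → X |
        Dense ((NonUnitalAlgebra.adjoin 𝕂 (Set.range f) : NonUnitalSubalgebra 𝕂 X) : Set X)} ∧
    Dense {f : ℕ → X |
        Dense ((NonUnitalAlgebra.adjoin 𝕂 (Set.range f) : NonUnitalSubalgebra 𝕂 X) : Set X)} :=
  stmt_5_general 𝕂 X
end

section
/- Let $X$ be a separable commutative $F$-algebra, $T$ a continuous linear operator on $X$, and $N \geq 2$. Suppose for each nonempty finite set $A \subseteq \mathbb{N}_0^N$ not containing the zero tuple there exists $\beta \in A$ such that for all nonempty open sets $U_1,\dots,U_N,V,W \subseteq X$ with $0 \in W$, there exist $f \in U_1 \times \cdots \times U_N$ and $q \in \mathbb{N}$ with $T^q(f^\beta) \in V$ and $T^q(f^\alpha) \in W$ for all $\alpha \in A \setminus \{\beta\}$. Then the set of $f \in X^N$ that generate a hypercyclic algebra for $T$ is residual in $X^N$. -/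
/-!
For a finite set `A` of nonzero exponents with dominant exponent `β`, the tuples `f` for which some
iterate `T^q` sends `f^β` into a given open set `V` and all other `f^α`, `α ∈ A`, into a given
neighbourhood `W` of `0` form an open set, dense by hypothesis. Intersecting over countable bases
and over all `A` gives a residual set. If `f` lies in it and `P = ∑ c_α X^α` with `A` the support
of `P`, then `T^q P(f) = c_β T^q f^β + ∑_{α ≠ β} c_α T^q f^α` can be steered close to
`c_β (c_β⁻¹ v) + 0 = v` for every `v`, so the orbit of `P(f)` is dense.
-/

open Set Filter Topology TopologicalSpace

theorem mem_closure_range_prod_pi {α E ι : Type*} [TopologicalSpace E] {u : α → E}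
    {w : α → ι → E} {a b : E} (h : ∀ U ∈ 𝓝 a, ∀ W ∈ 𝓝 b, ∃ n, u n ∈ U ∧ ∀ i, w n i ∈ W) :
    (a, fun _ => b) ∈ closure (range fun n => (u n, w n)) := by
  have hb : (𝓝 fun _ : ι => b).HasBasis (fun Ik : Set ι × Set E => Ik.1.Finite ∧ Ik.2 ∈ 𝓝 b)
      (fun Ik => Ik.1.pi fun _ => Ik.2) := by
    rw [nhds_pi]; exact (𝓝 b).basis_sets.pi_self
  rw [mem_closure_iff_nhds_basis (nhds_prod_eq (x := a) (y := fun _ => b) ▸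
    (𝓝 a).basis_sets.prod hb)]
  rintro ⟨U, I, W⟩ ⟨hU, -, hW⟩
  obtain ⟨n, hnU, hnW⟩ := h U hU W hW
  exact ⟨_, ⟨n, rfl⟩, hnU, fun i _ => hnW i⟩

theorem denseRange_smul_add_sum {α 𝕜 E ι : Type*} [Field 𝕜] [AddCommGroup E] [Module 𝕜 E]
    [TopologicalSpace E] [ContinuousAdd E] [ContinuousConstSMul 𝕜 E] [Fintype ι]
    {u : α → E} {w : α → ι → E}
    (h : ∀ v, ∀ U ∈ 𝓝 v, ∀ W ∈ 𝓝 (0 : E), ∃ n, u n ∈ U ∧ ∀ i, w n i ∈ W)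
    {c : 𝕜} (hc : c ≠ 0) (d : ι → 𝕜) :
    DenseRange fun n => c • u n + ∑ i, d i • w n i := by
  intro v
  have hΦ : Continuous fun p : E × (ι → E) => c • p.1 + ∑ i, d i • p.2 i := by fun_prop
  have := image_closure_subset_closure_image hΦ ⟨_, mem_closure_range_prod_pi (h (c⁻¹ • v)), rfl⟩
  simpa [smul_smul, hc, ← range_comp, Function.comp_def] using this

theorem dense_of_forall_exists_mem_pi {ι : Type*} [Finite ι] {π : ι → Type*}
    [∀ i, TopologicalSpace (π i)] {s : Set (∀ i, π i)}
    (h : ∀ U : ∀ i, Set (π i), (∀ i, IsOpen (U i)) → (∀ i, (U i).Nonempty) →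
      ∃ f ∈ s, ∀ i, f i ∈ U i) :
    Dense s := by
  rw [dense_iff_inter_open]
  rintro O hO ⟨g, hg⟩
  obtain ⟨U, hU, hUO⟩ := isOpen_pi_iff'.1 hO g hg
  obtain ⟨f, hfs, hfU⟩ := h U (fun i => (hU i).1) fun i => ⟨g i, (hU i).2⟩
  exact ⟨f, hUO fun i _ => hfU i, hfs⟩

section HitSet

variable {𝕂 X : Type*} [CommSemiring 𝕂] [CommSemiring X] [Module 𝕂 X] [TopologicalSpace X]
  {N : ℕ} (T : X →L[𝕂] X)

def hitSet (A : Finset (Fin N → ℕ)) (β : Fin N → ℕ) (V W : Set X) : Set (Fin N → X) :=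
  {f | ∃ q : ℕ, (T ^ q) (∏ i, f i ^ β i) ∈ V ∧ ∀ α ∈ A, α ≠ β → (T ^ q) (∏ i, f i ^ α i) ∈ W}

variable {T}

theorem hitSet_mono {A : Finset (Fin N → ℕ)} {β : Fin N → ℕ} {V V' W W' : Set X} (hV : V ⊆ V')
    (hW : W ⊆ W') : hitSet T A β V W ⊆ hitSet T A β V' W' :=
  fun _ ⟨q, hqV, hqW⟩ => ⟨q, hV hqV, fun α hα hαβ => hW (hqW α hα hαβ)⟩

theorem isOpen_hitSet [ContinuousMul X] {A : Finset (Fin N → ℕ)} {β : Fin N → ℕ} {V W : Set X}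
    (hV : IsOpen V) (hW : IsOpen W) : IsOpen (hitSet T A β V W) := by
  have hcont (q : ℕ) (γ : Fin N → ℕ) :
      Continuous fun f : Fin N → X => (T ^ q) (∏ i, f i ^ γ i) := by
    fun_prop
  refine isOpen_iff_eventually.2 fun f ⟨q, hqV, hqW⟩ => ?_
  have hβ := (hcont q β).continuousAt.eventually_mem (hV.mem_nhds hqV)
  have hα : ∀ᶠ g in 𝓝 f, ∀ α ∈ A, α ≠ β → (T ^ q) (∏ i, g i ^ α i) ∈ W :=
    (eventually_all_finset A).2 fun α hα => eventually_imp_distrib_left.2 fun hαβ =>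
      (hcont q α).continuousAt.eventually_mem (hW.mem_nhds (hqW α hα hαβ))
  exact (hβ.and hα).mono fun g hg => ⟨q, hg⟩

theorem residual_forall_mem_hitSet [SecondCountableTopology X] [BaireSpace (Fin N → X)]
    [ContinuousMul X] {J : Type*} [Countable J] (A : J → Finset (Fin N → ℕ)) (β : J → Fin N → ℕ)
    (hdense : ∀ j V W, IsOpen V → V.Nonempty → IsOpen W → (0 : X) ∈ W →
      Dense (hitSet T (A j) (β j) V W)) :
    {f | ∀ j, ∀ v, ∀ V ∈ 𝓝 v, ∀ W ∈ 𝓝 (0 : X), f ∈ hitSet T (A j) (β j) V W}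
      ∈ residual (Fin N → X) := by
  let B := countableBasis X
  have hB : IsTopologicalBasis B := isBasis_countableBasis X
  have hBc : B.Countable := countable_countableBasis X
  have hres : (⋂ j, ⋂ V ∈ {V ∈ B | V.Nonempty}, ⋂ W ∈ {W ∈ B | (0 : X) ∈ W},
      hitSet T (A j) (β j) V W) ∈ residual (Fin N → X) :=
    countable_iInter_mem.2 fun j => (countable_bInter_mem (hBc.mono (sep_subset _ _))).2
      fun V hV => (countable_bInter_mem (hBc.mono (sep_subset _ _))).2 fun W hW =>
        residual_of_dense_open (isOpen_hitSet (hB.isOpen hV.1) (hB.isOpen hW.1))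
          (hdense j V W (hB.isOpen hV.1) hV.2 (hB.isOpen hW.1) hW.2)
  refine mem_of_superset hres fun f hf j v V hV W hW => ?_
  obtain ⟨V', hV'B, hvV', hV'V⟩ := hB.mem_nhds_iff.1 hV
  obtain ⟨W', hW'B, h0W', hW'W⟩ := hB.mem_nhds_iff.1 hW
  have hfV'W' := mem_iInter₂.1 (mem_iInter₂.1 (mem_iInter.1 hf j) V' ⟨hV'B, v, hvV'⟩) W'
    ⟨hW'B, h0W'⟩
  exact hitSet_mono hV'V hW'W hfV'W'

end HitSet

namespace MvPolynomial

variable {R S σ : Type*} [CommSemiring R] [CommSemiring S] [Algebra R S]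

theorem aeval_eq_sum_smul_prod_pow [Fintype σ] (f : σ → S) (P : MvPolynomial σ R) :
    aeval f P = ∑ d ∈ P.support, coeff d P • ∏ i, f i ^ d i := by
  simp [aeval_def, eval₂_eq', Algebra.smul_def]

def exponentSet {N : ℕ} (P : MvPolynomial (Fin N) R) : Finset (Fin N → ℕ) :=
  P.support.image (⇑)

theorem exponentSet_nonempty {N : ℕ} {P : MvPolynomial (Fin N) R} (hP : P ≠ 0) :
    P.exponentSet.Nonempty :=
  (support_nonempty.2 hP).image _

theorem zero_notMem_exponentSet {N : ℕ} {P : MvPolynomial (Fin N) R} (hP : constantCoeff P = 0) :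
    0 ∉ P.exponentSet := by
  rintro h
  obtain ⟨d, hd, hd0⟩ := Finset.mem_image.1 h
  rw [show d = 0 from Finsupp.ext (congrFun hd0)] at hd
  exact mem_support_iff.1 hd hP

end MvPolynomial

open MvPolynomial in
theorem denseRange_iterate_aeval {𝕂 X : Type*} [Field 𝕂] [CommRing X] [Algebra 𝕂 X]
    [TopologicalSpace X] [ContinuousAdd X] [ContinuousConstSMul 𝕂 X] {N : ℕ} (T : X →L[𝕂] X)
    {f : Fin N → X} {P : MvPolynomial (Fin N) 𝕂} {β : Fin N → ℕ} (hβ : β ∈ P.exponentSet)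
    (hf : ∀ v, ∀ V ∈ 𝓝 v, ∀ W ∈ 𝓝 (0 : X), f ∈ hitSet T P.exponentSet β V W) :
    DenseRange fun n => (T ^ n) (aeval f P) := by
  obtain ⟨d₀, hd₀, rfl⟩ := Finset.mem_image.1 hβ
  have hsplit : ∀ n, (T ^ n) (aeval f P) = coeff d₀ P • (T ^ n) (∏ i, f i ^ d₀ i) +
      ∑ d : P.support.erase d₀, coeff d P • (T ^ n) (∏ i, f i ^ (d : Fin N →₀ ℕ) i) := by
    intro n
    rw [aeval_eq_sum_smul_prod_pow, ← Finset.add_sum_erase _ _ hd₀,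
      Finset.sum_coe_sort (P.support.erase d₀) fun d => coeff d P • (T ^ n) (∏ i, f i ^ d i)]
    simp only [map_add, map_sum, map_smul]
  simp only [hsplit]
  refine denseRange_smul_add_sum (fun v V hV W hW => ?_) (mem_support_iff.1 hd₀) _
  obtain ⟨q, hqV, hqW⟩ := hf v V hV W hW
  refine ⟨q, hqV, fun ⟨d, hd⟩ => hqW d (Finset.mem_image_of_mem _ (Finset.mem_of_mem_erase hd)) ?_⟩
  exact DFunLike.coe_injective.ne (Finset.ne_of_mem_erase hd)

theorem stmt_8_general (𝕂 X : Type*) [RCLike 𝕂] [CommRing X] [Algebra 𝕂 X]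
    [TopologicalSpace X] [IsTopologicalRing X] [ContinuousSMul 𝕂 X] [PolishSpace X]
    (N : ℕ) (T : X →L[𝕂] X)
    (hyp : ∀ A : Finset (Fin N → ℕ), A.Nonempty → (0 : Fin N → ℕ) ∉ A →
      ∃ β ∈ A, ∀ (U : Fin N → Set X) (V W : Set X),
        (∀ i, IsOpen (U i)) → (∀ i, (U i).Nonempty) →
        IsOpen V → V.Nonempty → IsOpen W → (0 : X) ∈ W →
        ∃ f : Fin N → X, (∀ i, f i ∈ U i) ∧ ∃ q : ℕ,
          (T ^ q) (∏ i, f i ^ β i) ∈ V ∧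
          ∀ α ∈ A, α ≠ β → (T ^ q) (∏ i, f i ^ α i) ∈ W) :
    {f : Fin N → X | ∀ P : MvPolynomial (Fin N) 𝕂, P ≠ 0 →
        MvPolynomial.constantCoeff P = 0 →
        Dense (Set.range fun n : ℕ => (T ^ n) (MvPolynomial.aeval f P))}
      ∈ residual (Fin N → X) := by
  choose! β hβA hβ using hyp
  let J := {A : Finset (Fin N → ℕ) // A.Nonempty ∧ 0 ∉ A}
  have hdense : ∀ (A : J) V W, IsOpen V → V.Nonempty → IsOpen W → (0 : X) ∈ W →
      Dense (hitSet T A.1 (β A.1) V W) := fun A V W hV hVne hW hW0 =>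
    dense_of_forall_exists_mem_pi fun U hU hUne =>
      let ⟨f, hfU, hf⟩ := hβ A.1 A.2.1 A.2.2 U V W hU hUne hV hVne hW hW0
      ⟨f, hf, hfU⟩
  filter_upwards [residual_forall_mem_hitSet _ _ hdense] with f hf P hP hP0
  let A : J := ⟨P.exponentSet, MvPolynomial.exponentSet_nonempty hP,
    MvPolynomial.zero_notMem_exponentSet hP0⟩
  exact denseRange_iterate_aeval T (hβA A.1 A.2.1 A.2.2) (hf A)

/-- Sufficient condition for a residual set of tuples generating a hypercyclic algebra. -/
theorem stmt_8 (𝕂 X : Type*) [RCLike 𝕂] [CommRing X] [Algebra 𝕂 X]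
    [TopologicalSpace X] [IsTopologicalRing X] [ContinuousSMul 𝕂 X] [PolishSpace X]
    (N : ℕ) (hN : 2 ≤ N) (T : X →L[𝕂] X)
    (hyp : ∀ A : Finset (Fin N → ℕ), A.Nonempty → (0 : Fin N → ℕ) ∉ A →
      ∃ β ∈ A, ∀ (U : Fin N → Set X) (V W : Set X),
        (∀ i, IsOpen (U i)) → (∀ i, (U i).Nonempty) →
        IsOpen V → V.Nonempty → IsOpen W → (0 : X) ∈ W →
        ∃ f : Fin N → X, (∀ i, f i ∈ U i) ∧ ∃ q : ℕ,
          (T ^ q) (∏ i, f i ^ β i) ∈ V ∧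
          ∀ α ∈ A, α ≠ β → (T ^ q) (∏ i, f i ^ α i) ∈ W) :
    {f : Fin N → X | ∀ P : MvPolynomial (Fin N) 𝕂, P ≠ 0 →
        MvPolynomial.constantCoeff P = 0 →
        Dense (Set.range fun n : ℕ => (T ^ n) (MvPolynomial.aeval f P))}
      ∈ residual (Fin N → X) :=
  stmt_8_general 𝕂 X N T hyp
end

section
/- Let $T$ be a weakly mixing multiplicative continuous linear operator on a separable commutative $F$-algebra $X$ over $\mathbb{K}$, and let $N \geq 2$. If for each nonzero polynomial $P \in \mathbb{K}[t_1,\dots,t_N]$ with $P(0)=0$ the evaluation map $\widehat{P}: X^N \to X$, $f \mapsto P(f_1,\dots,f_N)$, has dense range, then for each $f \in X^N$ hypercyclic for the $N$-fold direct sum $T \oplus \cdots \oplus T$, the algebra generated by $f_1,\dots,f_N$ consists (except possibly $0$) of hypercyclic vectors for $T$. -/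
/-!
Each iterate `T ^ n` is multiplicative and linear, so it commutes with evaluating a polynomial
without constant term: `T ^ n (P(f)) = P(T ^ n f)`. Hence the orbit of `P(f)` is the image of the
dense orbit of `f` under the continuous map `P̂`, whose range is dense by hypothesis.
-/

open MvPolynomial

section
variable {R A B σ : Type*} [CommSemiring R] [CommRing A] [CommRing B] [Algebra R A] [Algebra R B]

/-- The correction term accounts for `S 1`, which is only an idempotent, not necessarily `1`. -/
theorem map_aeval_of_map_mul (S : A →ₗ[R] B) (hS : ∀ a b, S (a * b) = S a * S b)
    (f : σ → A) (P : MvPolynomial σ R) :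
    S (aeval f P) = aeval (S ∘ f) P + constantCoeff P • (S 1 - 1) := by
  induction P using MvPolynomial.induction_on with
  | C c =>
    simp only [aeval_C, constantCoeff_C, Algebra.algebraMap_eq_smul_one, map_smul, smul_sub,
      add_sub_cancel]
  | add p q hp hq =>
    simp only [map_add, hp, hq, add_smul]
    abel
  | mul_X p i hp =>
    have h_one_mul : S 1 * S (f i) = S (f i) := by rw [← hS, one_mul]
    simp only [map_mul, aeval_X, hS, hp, constantCoeff_X, mul_zero, zero_smul, add_zero,
      Function.comp_apply, add_mul, smul_mul_assoc, sub_mul, h_one_mul, one_mul, sub_self,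
      smul_zero]

theorem map_aeval_of_map_mul_of_constantCoeff_eq_zero (S : A →ₗ[R] B)
    (hS : ∀ a b, S (a * b) = S a * S b) (f : σ → A) {P : MvPolynomial σ R}
    (hP : constantCoeff P = 0) : S (aeval f P) = aeval (S ∘ f) P := by
  rw [map_aeval_of_map_mul S hS, hP, zero_smul, add_zero]

end

theorem MvPolynomial.continuous_aeval {R X σ : Type*} [CommSemiring R] [CommRing X]
    [Algebra R X] [TopologicalSpace X] [IsTopologicalRing X] (P : MvPolynomial σ R) :
    Continuous fun g : σ → X => aeval g P := by
  simpa only [aeval_def, ← eval_map] using continuous_eval (map (algebraMap R X) P)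

theorem ContinuousLinearMap.pow_apply_mul {R X : Type*} [Semiring R] [Semiring X] [Module R X]
    [TopologicalSpace X] (T : X →L[R] X) (hT : ∀ a b, T (a * b) = T a * T b) (n : ℕ)
    (a b : X) : (T ^ n) (a * b) = (T ^ n) a * (T ^ n) b := by
  induction n generalizing a b with
  | zero => rfl
  | succ n ih =>
    rw [pow_succ]
    exact (congrArg (T ^ n) (hT a b)).trans (ih _ _)

theorem stmt_9_general (𝕂 X : Type*) [RCLike 𝕂] [CommRing X] [Algebra 𝕂 X]
    [TopologicalSpace X] [IsTopologicalRing X]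
    (T : X →L[𝕂] X) (hmul : ∀ a b : X, T (a * b) = T a * T b)
    (N : ℕ)
    (hdr : ∀ P : MvPolynomial (Fin N) 𝕂, P ≠ 0 → MvPolynomial.constantCoeff P = 0 →
      DenseRange (fun f : Fin N → X => MvPolynomial.aeval f P)) :
    ∀ f : Fin N → X,
      Dense (Set.range fun n : ℕ => fun i : Fin N => (T ^ n) (f i)) →
      ∀ P : MvPolynomial (Fin N) 𝕂, P ≠ 0 → MvPolynomial.constantCoeff P = 0 →
        MvPolynomial.aeval f P ≠ 0 →
        Dense (Set.range fun n : ℕ => (T ^ n) (MvPolynomial.aeval f P)) := by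
  intro f hf P hP hP₀ _
  have h_orbit : (fun n : ℕ => (T ^ n) (aeval f P))
      = (fun g : Fin N → X => aeval g P) ∘ fun n i => (T ^ n) (f i) := by
    funext n
    exact map_aeval_of_map_mul_of_constantCoeff_eq_zero (T ^ n).toLinearMap
      (T.pow_apply_mul hmul n) f hP₀
  rw [h_orbit]
  exact (hdr P hP hP₀).comp hf (continuous_aeval P)

/-- If every polynomial evaluation map (for polynomials vanishing at the origin) has dense
range, then every vector hypercyclic for the `N`-fold direct sum of a weakly mixing
multiplicative operator generates an algebra consisting (except `0`) of hypercyclic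
vectors. -/
theorem stmt_9 (𝕂 X : Type*) [RCLike 𝕂] [CommRing X] [Algebra 𝕂 X]
    [TopologicalSpace X] [IsTopologicalRing X] [ContinuousSMul 𝕂 X] [PolishSpace X]
    (T : X →L[𝕂] X) (hmul : ∀ a b : X, T (a * b) = T a * T b)
    (hwm : ∃ g : X × X, Dense (Set.range fun n : ℕ => ((T ^ n) g.1, (T ^ n) g.2)))
    (N : ℕ) (hN : 2 ≤ N)
    (hdr : ∀ P : MvPolynomial (Fin N) 𝕂, P ≠ 0 → MvPolynomial.constantCoeff P = 0 →
      DenseRange (fun f : Fin N → X => MvPolynomial.aeval f P)) :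
    ∀ f : Fin N → X,
      Dense (Set.range fun n : ℕ => fun i : Fin N => (T ^ n) (f i)) →
      ∀ P : MvPolynomial (Fin N) 𝕂, P ≠ 0 → MvPolynomial.constantCoeff P = 0 →
        MvPolynomial.aeval f P ≠ 0 →
        Dense (Set.range fun n : ℕ => (T ^ n) (MvPolynomial.aeval f P)) :=
  stmt_9_general 𝕂 X T hmul N hdr
end

section
/- Let $X$ be a commutative $F$-algebra over $\mathbb{K}$ and $T$ a multiplicative continuous linear operator on $X$ supporting a (singly generated) hypercyclic algebra. Then for every $N \geq 2$ and every nonzero polynomial $P \in \mathbb{K}[t_1,\dots,t_N]$ with $P(0)=0$, the map $\widehat{P}: X^N \to X$, $f \mapsto P(f_1,\dots,f_N)$, has dense range. -/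
/-!
Pick `v ∈ 𝕂ᴺ` with `P(v) ≠ 0` and restrict `P` to the line through `v`: `q(z) = P(z v)` is a
nonzero one-variable polynomial without constant term. Since every `Tⁿ` is linear and
multiplicative, it commutes with polynomials without constant term, so
`Tⁿ (q f) = q (Tⁿ f) = P(v₁ Tⁿ f, …, v_N Tⁿ f)`. The orbit of `q f`, which is dense because `f`
generates a hypercyclic algebra, therefore lies in the range of `f ↦ P(f₁, …, f_N)`.
-/

open Polynomial

theorem ContinuousLinearMap.pow_apply_mul_of_map_mul {R A : Type*} [Semiring R]
    [NonUnitalNonAssocSemiring A] [TopologicalSpace A] [Module R A] (T : A →L[R] A)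
    (hT : ∀ a b, T (a * b) = T a * T b) (n : ℕ) (a b : A) :
    (T ^ n) (a * b) = (T ^ n) a * (T ^ n) b := by
  induction n with
  | zero => rfl
  | succ n ih => simp only [pow_succ', mul_apply_eq_comp, ih, hT]

/-- The constant term has to vanish because `φ 1` need not be `1`. -/
theorem Polynomial.aeval_map_of_map_mul {R A B : Type*} [CommSemiring R] [Semiring A]
    [Semiring B] [Algebra R A] [Algebra R B] (φ : A →ₗ[R] B)
    (hφ : ∀ a b, φ (a * b) = φ a * φ b) {p : R[X]} (hp : p.coeff 0 = 0) (a : A) :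
    φ (aeval a p) = aeval (φ a) p := by
  have map_pow_succ : ∀ k, φ (a ^ (k + 1)) = φ a ^ (k + 1) := by
    intro k
    induction k with
    | zero => simp
    | succ k ih => rw [pow_succ, hφ, ih, ← pow_succ]
  rw [aeval_eq_sum_range, aeval_eq_sum_range, map_sum]
  refine Finset.sum_congr rfl fun k _ => ?_
  rcases k with _ | k
  · simp [hp]
  · rw [map_smul, map_pow_succ]

namespace MvPolynomial

variable {σ R : Type*}

theorem exists_eval_ne_zero_of_ne_zero [CommRing R] [IsDomain R] [Infinite R]
    {P : MvPolynomial σ R} (hP : P ≠ 0) : ∃ v : σ → R, eval v P ≠ 0 := by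
  by_contra! h
  exact hP (funext fun v => by simp [h v])

variable [CommSemiring R]

noncomputable def restrictToLine (P : MvPolynomial σ R) (v : σ → R) : R[X] :=
  aeval (fun i => Polynomial.C (v i) * Polynomial.X) P

theorem aeval_restrictToLine {A : Type*} [CommSemiring A] [Algebra R A]
    (P : MvPolynomial σ R) (v : σ → R) (a : A) :
    Polynomial.aeval a (P.restrictToLine v) = aeval (fun i => v i • a) P := by
  rw [restrictToLine, ← AlgHom.comp_apply, comp_aeval]
  simp only [map_mul, Polynomial.aeval_C, Polynomial.aeval_X, Algebra.smul_def]

theorem restrictToLine_coeff_zero (P : MvPolynomial σ R) (v : σ → R) :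
    (P.restrictToLine v).coeff 0 = constantCoeff P := by
  rw [coeff_zero_eq_aeval_zero, aeval_restrictToLine]
  simp only [smul_zero, aeval_zero', Algebra.algebraMap_self, RingHom.id_apply]

theorem restrictToLine_ne_zero {P : MvPolynomial σ R} {v : σ → R} (hv : eval v P ≠ 0) :
    P.restrictToLine v ≠ 0 := by
  intro h
  have h1 := aeval_restrictToLine P v (1 : R)
  simp only [h, map_zero, smul_eq_mul, mul_one] at h1
  exact hv h1.symm

end MvPolynomial

theorem stmt_11_general (𝕂 X : Type*) [RCLike 𝕂] [CommRing X] [Algebra 𝕂 X]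
    [TopologicalSpace X]
    (T : X →L[𝕂] X) (hmul : ∀ a b : X, T (a * b) = T a * T b)
    (hhc : ∃ f : X, ∀ p : Polynomial 𝕂, p ≠ 0 → p.coeff 0 = 0 →
      Dense (Set.range fun n : ℕ => (T ^ n) (Polynomial.aeval f p))) :
    ∀ (N : ℕ), 2 ≤ N → ∀ P : MvPolynomial (Fin N) 𝕂, P ≠ 0 →
      MvPolynomial.constantCoeff P = 0 →
      DenseRange (fun f : Fin N → X => MvPolynomial.aeval f P) := by
  obtain ⟨f, hf⟩ := hhc
  intro N _ P hP hP0
  obtain ⟨v, hv⟩ := MvPolynomial.exists_eval_ne_zero_of_ne_zero hP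
  have hq0 : (P.restrictToLine v).coeff 0 = 0 := by
    rw [MvPolynomial.restrictToLine_coeff_zero, hP0]
  refine (hf _ (MvPolynomial.restrictToLine_ne_zero hv) hq0).mono ?_
  rintro _ ⟨n, rfl⟩
  refine ⟨fun i => v i • (T ^ n) f, ?_⟩
  dsimp only
  rw [← MvPolynomial.aeval_restrictToLine, ← ContinuousLinearMap.coe_coe,
    Polynomial.aeval_map_of_map_mul _ (T.pow_apply_mul_of_map_mul hmul n) hq0]

/-- If a multiplicative operator on a commutative F-algebra supports a singly generated
hypercyclic algebra, then every nonzero polynomial (in several variables) vanishing at the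
origin induces an evaluation map with dense range. -/
theorem stmt_11 (𝕂 X : Type*) [RCLike 𝕂] [CommRing X] [Algebra 𝕂 X]
    [TopologicalSpace X] [IsTopologicalRing X] [ContinuousSMul 𝕂 X] [PolishSpace X]
    (T : X →L[𝕂] X) (hmul : ∀ a b : X, T (a * b) = T a * T b)
    (hhc : ∃ f : X, ∀ p : Polynomial 𝕂, p ≠ 0 → p.coeff 0 = 0 →
      Dense (Set.range fun n : ℕ => (T ^ n) (Polynomial.aeval f p))) :
    ∀ (N : ℕ), 2 ≤ N → ∀ P : MvPolynomial (Fin N) 𝕂, P ≠ 0 →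
      MvPolynomial.constantCoeff P = 0 →
      DenseRange (fun f : Fin N → X => MvPolynomial.aeval f P) :=
  stmt_11_general 𝕂 X T hmul hhc
end
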